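/- arXiv:2204.02570 — 2 statements merged into one kernel-verified Lean document; each statement's English description precedes it below -/
import Mathlib

section
/- Let μ be a probability measure on a finite set Ω, and let P be the transition matrix of an ergodic reversible Markov chain on Ω with stationary distribution μ. Suppose there exists α ∈ (0,1] such that for all probability measures ν on Ω, KL(νP ‖ μP) ≤ (1−α)·KL(ν ‖ μ). Then for every ε ∈ (0,1), the mixing time satisfies t_mix(P, ε) ≤ ⌈(1/α)·(log log(1/min_x μ(x)) + log(1/(2ε²)))⌉. -/
open Finset

variable {Ω : Type*}

/-- One step of the Markov chain `P` applied to a distribution `ν` (as a row vector). -/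
noncomputable def mcStep [Fintype Ω] (P : Ω → Ω → ℝ) (ν : Ω → ℝ) : Ω → ℝ :=
  fun y => ∑ x, ν x * P x y

/-- KL divergence between distributions on a finite set. -/
noncomputable def klDiv [Fintype Ω] (ν μ : Ω → ℝ) : ℝ :=
  ∑ x, ν x * Real.log (ν x / μ x)

/-- Total variation distance between distributions on a finite set. -/
noncomputable def tvDist [Fintype Ω] (ν μ : Ω → ℝ) : ℝ :=
  (1 / 2) * ∑ x, |ν x - μ x|

/-- Point mass at `x`. -/
noncomputable def pointMass [DecidableEq Ω] (x : Ω) : Ω → ℝ :=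
  fun y => if y = x then 1 else 0

/-!
Detailed balance makes `μ` stationary, so the contraction hypothesis applies along the chain
and gives `KL(δₓPᵗ ‖ μ) ≤ (1 - α)ᵗ log (1 / μ x) ≤ e^{-αt} log (1 / min μ)`, which is at most
`2ε²` at the stated `t`; Pinsker's inequality turns this into `d_TV ≤ ε`.

Pinsker's inequality follows from Cauchy–Schwarz with the weights `(2ν + 4μ) / 3`, of total mass
`2`, and the pointwise bound `3 (a - b)² / (2a + 4b) ≤ b · klFun (a / b)`, which is proved by
showing that `klFun t - 3/2 (t - 1)² / (t + 2)` decreases on `[0, 1]` and increases on `[1, ∞)`.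
-/

open Real

open InformationTheory (klFun klFun_apply klFun_one hasDerivAt_klFun continuous_klFun)

section KlFunLowerBound

open Set

lemma hasDerivAt_log_sub_rational {t : ℝ} (ht : 0 < t) :
    HasDerivAt (fun s => log s - 3 / 2 * ((s - 1) * (s + 5) / (s + 2) ^ 2))
      (1 / t - 27 / (t + 2) ^ 3) t := by
  have ht2 : t + 2 ≠ 0 := by positivity
  have h := (hasDerivAt_log ht.ne').sub
    (((((hasDerivAt_id' t).sub_const 1).mul ((hasDerivAt_id' t).add_const 5)).div
      (((hasDerivAt_id' t).add_const 2).pow 2) (pow_ne_zero 2 ht2)).const_mul (3 / 2))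
  refine h.congr_deriv ?_
  simp only [Pi.mul_apply, Pi.pow_apply]
  field_simp
  ring

lemma monotoneOn_log_sub_rational :
    MonotoneOn (fun s => log s - 3 / 2 * ((s - 1) * (s + 5) / (s + 2) ^ 2)) (Ioi 0) := by
  have hderiv := fun t (ht : t ∈ Ioi (0 : ℝ)) => hasDerivAt_log_sub_rational ht
  refine monotoneOn_of_hasDerivWithinAt_nonneg (f' := fun t => 1 / t - 27 / (t + 2) ^ 3)
    (convex_Ioi 0) (fun t ht => (hderiv t ht).continuousAt.continuousWithinAt) ?_ ?_ <;>
    rw [interior_Ioi]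
  · exact fun t ht => (hderiv t ht).hasDerivWithinAt
  intro t (ht : 0 < t)
  -- `(t + 2) ^ 3 ≥ 27 t` is AM-GM for `t, 1, 1`
  rw [sub_nonneg, div_le_div_iff₀ (by positivity) ht]
  nlinarith [sq_nonneg (t - 1), sq_nonneg t]

lemma hasDerivAt_klFun_sub_rational {t : ℝ} (ht : 0 < t) :
    HasDerivAt (fun s => klFun s - 3 / 2 * ((s - 1) ^ 2 / (s + 2)))
      (log t - 3 / 2 * ((t - 1) * (t + 5) / (t + 2) ^ 2)) t := by
  have ht2 : t + 2 ≠ 0 := by positivity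
  have h := (hasDerivAt_klFun ht.ne').sub
    (((((hasDerivAt_id' t).sub_const 1).pow 2).div
      ((hasDerivAt_id' t).add_const 2) ht2).const_mul (3 / 2))
  refine h.congr_deriv ?_
  simp only [Pi.pow_apply]
  field_simp
  ring

lemma three_halves_mul_sq_div_le_klFun {t : ℝ} (ht : 0 ≤ t) :
    3 / 2 * ((t - 1) ^ 2 / (t + 2)) ≤ klFun t := by
  set g := fun s : ℝ => klFun s - 3 / 2 * ((s - 1) ^ 2 / (s + 2))
  set g' := fun s : ℝ => log s - 3 / 2 * ((s - 1) * (s + 5) / (s + 2) ^ 2)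
  have hg1 : g 1 = 0 := by simp [g, klFun_one]
  have hg'1 : g' 1 = 0 := by norm_num [g']
  have hcont : ContinuousOn g (Ici 0) := by
    refine continuous_klFun.continuousOn.sub (ContinuousOn.mul continuousOn_const ?_)
    exact (by fun_prop : Continuous fun s : ℝ => (s - 1) ^ 2).continuousOn.div (by fun_prop)
      fun s (hs : 0 ≤ s) => by positivity
  suffices 0 ≤ g t by simpa [g] using this
  rw [← hg1]
  rcases le_total 1 t with h1 | h1
  · refine monotoneOn_of_hasDerivWithinAt_nonneg (f' := g') (convex_Ici 1)
      (hcont.mono (Ici_subset_Ici.2 zero_le_one)) ?_ ?_ self_mem_Ici h1 h1 <;> rw [interior_Ici]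
    · exact fun s (hs : 1 < s) =>
        (hasDerivAt_klFun_sub_rational (one_pos.trans hs)).hasDerivWithinAt
    · exact fun s (hs : 1 < s) =>
        hg'1 ▸ monotoneOn_log_sub_rational (mem_Ioi.2 one_pos) (one_pos.trans hs) hs.le
  · refine antitoneOn_of_hasDerivWithinAt_nonpos (f' := g') (convex_Icc 0 1)
      (hcont.mono Icc_subset_Ici_self) ?_ ?_ ⟨ht, h1⟩ (right_mem_Icc.2 zero_le_one) h1 <;>
      rw [interior_Icc]
    · exact fun s hs => (hasDerivAt_klFun_sub_rational hs.1).hasDerivWithinAt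
    · exact fun s hs => hg'1 ▸ monotoneOn_log_sub_rational hs.1 (mem_Ioi.2 one_pos) hs.2.le

end KlFunLowerBound

lemma three_mul_sq_div_le_mul_log_div {a b : ℝ} (ha : 0 ≤ a) (hb : 0 < b) :
    3 * (a - b) ^ 2 / (2 * a + 4 * b) ≤ a * log (a / b) - a + b := by
  have hb' := hb.ne'
  calc 3 * (a - b) ^ 2 / (2 * a + 4 * b) = b * (3 / 2 * ((a / b - 1) ^ 2 / (a / b + 2))) := by
        field_simp
        ring
    _ ≤ b * klFun (a / b) :=
        mul_le_mul_of_nonneg_left (three_halves_mul_sq_div_le_klFun (by positivity)) hb.le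
    _ = a * log (a / b) - a + b := by
        rw [klFun_apply]
        field_simp
        ring

lemma tvDist_sq_le_klDiv_div_two [Fintype Ω] {ν μ : Ω → ℝ} (hν0 : ∀ x, 0 ≤ ν x)
    (hν1 : ∑ x, ν x = 1) (hμ0 : ∀ x, 0 < μ x) (hμ1 : ∑ x, μ x = 1) :
    tvDist ν μ ^ 2 ≤ klDiv ν μ / 2 := by
  set g : Ω → ℝ := fun x => (2 * ν x + 4 * μ x) / 3
  have hg0 : ∀ x ∈ univ, 0 < g x := fun x _ => by
    have := hν0 x
    have := hμ0 x
    positivity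
  have hg1 : ∑ x, g x = 2 := by
    simp only [g, ← sum_div, sum_add_distrib, ← mul_sum, hν1, hμ1]
    norm_num
  have hCS := sq_sum_div_le_sum_sq_div univ (fun x => |ν x - μ x|) hg0
  have hpointwise : ∑ x, |ν x - μ x| ^ 2 / g x ≤ klDiv ν μ := calc
    _ ≤ ∑ x, (ν x * log (ν x / μ x) - ν x + μ x) := sum_le_sum fun x _ => by
          dsimp only [g]
          rw [sq_abs, div_div_eq_mul_div, mul_comm]
          exact three_mul_sq_div_le_mul_log_div (hν0 x) (hμ0 x)
    _ = klDiv ν μ := by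
          rw [sum_add_distrib, sum_sub_distrib, hν1, hμ1, klDiv]
          ring
  rw [hg1] at hCS
  rw [tvDist]
  nlinarith

section MarkovChain

variable [Fintype Ω] {P : Ω → Ω → ℝ}

lemma mcStep_nonneg (hP0 : ∀ x y, 0 ≤ P x y) {ν : Ω → ℝ} (hν : ∀ x, 0 ≤ ν x) (y : Ω) :
    0 ≤ mcStep P ν y :=
  sum_nonneg fun x _ => mul_nonneg (hν x) (hP0 x y)

lemma sum_mcStep (hProw : ∀ x, ∑ y, P x y = 1) (ν : Ω → ℝ) :
    ∑ y, mcStep P ν y = ∑ x, ν x := by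
  simp only [mcStep]
  rw [sum_comm]
  simp only [← mul_sum, hProw, mul_one]

lemma iterate_mcStep_nonneg (hP0 : ∀ x y, 0 ≤ P x y) {ν : Ω → ℝ} (hν : ∀ x, 0 ≤ ν x)
    (t : ℕ) : ∀ y, 0 ≤ (mcStep P)^[t] ν y := by
  induction t with
  | zero => exact hν
  | succ t ih => simpa only [Function.iterate_succ_apply'] using mcStep_nonneg hP0 ih

lemma sum_iterate_mcStep (hProw : ∀ x, ∑ y, P x y = 1) (ν : Ω → ℝ) (t : ℕ) :
    ∑ y, (mcStep P)^[t] ν y = ∑ x, ν x := by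
  induction t with
  | zero => rfl
  | succ t ih => rw [Function.iterate_succ_apply', sum_mcStep hProw, ih]

lemma mcStep_eq_self_of_reversible (hProw : ∀ x, ∑ y, P x y = 1) {μ : Ω → ℝ}
    (hrev : ∀ x y, μ x * P x y = μ y * P y x) : mcStep P μ = μ := by
  funext y
  simp only [mcStep, hrev _ y, ← mul_sum, hProw, mul_one]

lemma klDiv_iterate_mcStep_le (hP0 : ∀ x y, 0 ≤ P x y) (hProw : ∀ x, ∑ y, P x y = 1)
    {μ : Ω → ℝ} (hstat : mcStep P μ = μ) {α : ℝ} (hα1 : α ≤ 1)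
    (hcontr : ∀ ν : Ω → ℝ, (∀ x, 0 ≤ ν x) → ∑ x, ν x = 1 →
      klDiv (mcStep P ν) (mcStep P μ) ≤ (1 - α) * klDiv ν μ)
    {ν : Ω → ℝ} (hν0 : ∀ x, 0 ≤ ν x) (hν1 : ∑ x, ν x = 1) (t : ℕ) :
    klDiv ((mcStep P)^[t] ν) μ ≤ (1 - α) ^ t * klDiv ν μ := by
  induction t with
  | zero => simp
  | succ t ih =>
    calc klDiv ((mcStep P)^[t + 1] ν) μ
        = klDiv (mcStep P ((mcStep P)^[t] ν)) (mcStep P μ) := by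
          rw [Function.iterate_succ_apply', hstat]
      _ ≤ (1 - α) * klDiv ((mcStep P)^[t] ν) μ :=
          hcontr _ (iterate_mcStep_nonneg hP0 hν0 t) (by rw [sum_iterate_mcStep hProw, hν1])
      _ ≤ (1 - α) * ((1 - α) ^ t * klDiv ν μ) := by gcongr
      _ = (1 - α) ^ (t + 1) * klDiv ν μ := by ring

end MarkovChain

section PointMass

variable [DecidableEq Ω]

lemma pointMass_nonneg (x y : Ω) : 0 ≤ pointMass x y := by
  unfold pointMass
  split_ifs <;> norm_num

lemma sum_pointMass [Fintype Ω] (x : Ω) : ∑ y, pointMass x y = 1 := by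
  simp [pointMass]

lemma klDiv_pointMass [Fintype Ω] (x : Ω) (μ : Ω → ℝ) :
    klDiv (pointMass x) μ = log (1 / μ x) := by
  rw [klDiv, sum_eq_single x (fun y _ hy => by simp [pointMass, hy]) (by simp)]
  simp [pointMass]

end PointMass

lemma one_sub_pow_mul_le {α δ L : ℝ} (hα0 : 0 < α) (hα1 : α ≤ 1) (hδ : 0 < δ) {T : ℕ}
    (hT : (1 / α) * (log L + log (1 / δ)) ≤ T) : (1 - α) ^ T * L ≤ δ := by
  rcases le_or_gt L 0 with hL | hL
  · nlinarith [pow_nonneg (sub_nonneg.2 hα1) T]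
  have hexp : -(α * T) ≤ log (δ / L) := by
    have := mul_le_mul_of_nonneg_left hT hα0.le
    rw [← mul_assoc, mul_one_div_cancel hα0.ne', one_mul, one_div, log_inv] at this
    rw [log_div hδ.ne' hL.ne']
    linarith
  calc (1 - α) ^ T * L ≤ exp (-α) ^ T * L := by
        gcongr
        linarith [add_one_le_exp (-α)]
    _ = exp (-(α * T)) * L := by rw [← exp_nat_mul]; ring_nf
    _ ≤ δ / L * L := by
        gcongr
        simpa only [exp_log (div_pos hδ hL)] using exp_le_exp.2 hexp
    _ = δ := div_mul_cancel₀ δ hL.ne'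

theorem mixing_from_entropy_contraction_general
    [Fintype Ω] [DecidableEq Ω] [Nonempty Ω]
    (μ : Ω → ℝ) (P : Ω → Ω → ℝ)
    (hμpos : ∀ x, 0 < μ x) (hμ1 : ∑ x, μ x = 1)
    (hP0 : ∀ x y, 0 ≤ P x y) (hProw : ∀ x, ∑ y, P x y = 1)
    (hrev : ∀ x y, μ x * P x y = μ y * P y x)
    (α : ℝ) (hα0 : 0 < α) (hα1 : α ≤ 1)
    (hcontr : ∀ ν : Ω → ℝ, (∀ x, 0 ≤ ν x) → ∑ x, ν x = 1 →
      klDiv (mcStep P ν) (mcStep P μ) ≤ (1 - α) * klDiv ν μ)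
    (ε : ℝ) (hε0 : 0 < ε)
    (T : ℕ)
    (hT : T = ⌈(1 / α) * (Real.log (Real.log
        (1 / (Finset.univ.inf' Finset.univ_nonempty μ))) +
        Real.log (1 / (2 * ε ^ 2)))⌉₊) (x : Ω) :
    tvDist ((mcStep P)^[T] (pointMass x)) μ ≤ ε := by
  set μmin := univ.inf' univ_nonempty μ
  have hμmin : 0 < μmin := (lt_inf'_iff _).2 fun y _ => hμpos y
  have hstart : klDiv (pointMass x) μ ≤ log (1 / μmin) := by
    rw [klDiv_pointMass]
    exact log_le_log (one_div_pos.2 (hμpos x))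
      (one_div_le_one_div_of_le hμmin (inf'_le μ (mem_univ x)))
  have hKL : klDiv ((mcStep P)^[T] (pointMass x)) μ ≤ 2 * ε ^ 2 := calc
    _ ≤ (1 - α) ^ T * klDiv (pointMass x) μ :=
        klDiv_iterate_mcStep_le hP0 hProw (mcStep_eq_self_of_reversible hProw hrev) hα1 hcontr
          (pointMass_nonneg x) (sum_pointMass x) T
    _ ≤ (1 - α) ^ T * log (1 / μmin) := by gcongr
    _ ≤ 2 * ε ^ 2 := one_sub_pow_mul_le hα0 hα1 (by positivity) (hT ▸ Nat.le_ceil _)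
  have hTV := tvDist_sq_le_klDiv_div_two (iterate_mcStep_nonneg hP0 (pointMass_nonneg x) T)
    (by rw [sum_iterate_mcStep hProw, sum_pointMass]) hμpos hμ1
  exact le_of_sq_le_sq (by linarith) hε0.le

theorem mixing_from_entropy_contraction
    [Fintype Ω] [DecidableEq Ω] [Nonempty Ω]
    (μ : Ω → ℝ) (P : Ω → Ω → ℝ)
    (hμpos : ∀ x, 0 < μ x) (hμ1 : ∑ x, μ x = 1)
    (hP0 : ∀ x y, 0 ≤ P x y) (hProw : ∀ x, ∑ y, P x y = 1)
    (hrev : ∀ x y, μ x * P x y = μ y * P y x)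
    (hergodic : ∃ t : ℕ, ∀ x y, 0 < (mcStep P)^[t] (pointMass x) y)
    (α : ℝ) (hα0 : 0 < α) (hα1 : α ≤ 1)
    (hcontr : ∀ ν : Ω → ℝ, (∀ x, 0 ≤ ν x) → ∑ x, ν x = 1 →
      klDiv (mcStep P ν) (mcStep P μ) ≤ (1 - α) * klDiv ν μ)
    (ε : ℝ) (hε0 : 0 < ε) (hε1 : ε < 1)
    (T : ℕ)
    (hT : T = ⌈(1 / α) * (Real.log (Real.log
        (1 / (Finset.univ.inf' Finset.univ_nonempty μ))) +
        Real.log (1 / (2 * ε ^ 2)))⌉₊) (x : Ω) :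
    tvDist ((mcStep P)^[T] (pointMass x)) μ ≤ ε :=
  mixing_from_entropy_contraction_general μ P hμpos hμ1 hP0 hProw hrev α hα0 hα1 hcontr ε hε0 T hT x
end

section
/- With the setup of the previous statement (μ negatively correlated on size-k subsets, p^max := max_i p_i < 1), conditioning on j ∉ F changes the marginal of i by at most a multiplicative factor: P_{F∼μ'}[i ∈ F] − P_{F∼μ}[i ∈ F] ≤ (p^max/(1 − p^max))·P_{F∼μ}[i ∈ F]. -/
/-!
Write `A = P[i, j ∈ F]` and `B = P[i ∈ F, j ∉ F]`, so that `p_i = A + B` and the conditioned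
marginal is `B / (1 - p_j)`. The change of the marginal is then exactly
`(p_i p_j - A) / (1 - p_j)`, which is at most `p_i · p_j / (1 - p_j) ≤ p_i · p^max / (1 - p^max)`
because `A ≥ 0` and `x ↦ x / (1 - x)` is monotone below `1`.
-/

/-- Marginal of element `i` under a distribution on subsets of a finite type `V`. -/
noncomputable def marg {V : Type*} [Fintype V] [DecidableEq V]
    (μ : Finset V → ℝ) (i : V) : ℝ :=
  ∑ S ∈ Finset.univ.filter (fun S : Finset V => i ∈ S), μ S

open Finset

theorem div_one_sub_le_div_one_sub {q m : ℝ} (hqm : q ≤ m) (hm : m < 1) :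
    q / (1 - q) ≤ m / (1 - m) := by
  rw [div_le_div_iff₀ (by linarith) (by linarith)]
  nlinarith

theorem div_one_sub_sub_le_mul {p q a m : ℝ} (ha : 0 ≤ a) (hp : 0 ≤ p) (hqm : q ≤ m)
    (hm : m < 1) : (p - a) / (1 - q) - p ≤ m / (1 - m) * p := by
  have hq : 0 < 1 - q := by linarith
  calc (p - a) / (1 - q) - p = (p * q - a) / (1 - q) := by field_simp; ring
    _ ≤ p * q / (1 - q) := by gcongr; linarith
    _ = p * (q / (1 - q)) := mul_div_assoc _ _ _
    _ ≤ p * (m / (1 - m)) := mul_le_mul_of_nonneg_left (div_one_sub_le_div_one_sub hqm hm) hp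
    _ = m / (1 - m) * p := mul_comm _ _

section

variable {V : Type*} [Fintype V] [DecidableEq V]

theorem marg_nonneg {μ : Finset V → ℝ} (hμ0 : ∀ S, 0 ≤ μ S) (i : V) : 0 ≤ marg μ i :=
  sum_nonneg fun S _ => hμ0 S

theorem marg_eq_sum_mem_add_sum_not_mem (μ : Finset V → ℝ) (i j : V) :
    marg μ i = ∑ S ∈ univ.filter (fun S : Finset V => i ∈ S ∧ j ∈ S), μ S +
      ∑ S ∈ univ.filter (fun S : Finset V => i ∈ S ∧ j ∉ S), μ S := by
  rw [marg, ← sum_filter_add_sum_filter_not _ (fun S => j ∈ S), filter_filter, filter_filter]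

theorem marg_of_condition_not_mem {μ μ' : Finset V → ℝ} {j : V}
    (hμ' : ∀ S : Finset V, μ' S = if j ∈ S then 0 else μ S / (1 - marg μ j)) (i : V) :
    marg μ' i = (∑ S ∈ univ.filter (fun S : Finset V => i ∈ S ∧ j ∉ S), μ S) / (1 - marg μ j) := by
  simp only [marg, hμ', sum_ite, sum_const_zero, zero_add, ← sum_div, filter_filter]

end

theorem marginal_change_multiplicative_bound_general
    {V : Type*} [Fintype V] [DecidableEq V]
    (μ : Finset V → ℝ)
    (hμ0 : ∀ S, 0 ≤ μ S)
    (pmax : ℝ) (hpmax : ∀ l, marg μ l ≤ pmax) (hpmax1 : pmax < 1)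
    (i j : V)
    (μ' : Finset V → ℝ)
    (hμ' : ∀ S : Finset V, μ' S = if j ∈ S then 0 else μ S / (1 - marg μ j)) :
    marg μ' i - marg μ i ≤ (pmax / (1 - pmax)) * marg μ i := by
  have hsplit := marg_eq_sum_mem_add_sum_not_mem μ i j
  rw [marg_of_condition_not_mem hμ' i, eq_sub_of_add_eq' hsplit.symm]
  exact div_one_sub_sub_le_mul (sum_nonneg fun S _ => hμ0 S) (marg_nonneg hμ0 i)
    (hpmax j) hpmax1

theorem marginal_change_multiplicative_bound
    {V : Type*} [Fintype V] [DecidableEq V] (k : ℕ)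
    (μ : Finset V → ℝ)
    (hμ0 : ∀ S, 0 ≤ μ S) (hμ1 : ∑ S : Finset V, μ S = 1)
    (hhom : ∀ S, μ S ≠ 0 → S.card = k)
    (hnegcor : ∀ i j : V, i ≠ j →
      (∑ S ∈ Finset.univ.filter (fun S : Finset V => i ∈ S ∧ j ∈ S), μ S) ≤
        marg μ i * marg μ j)
    (pmax : ℝ) (hpmax : ∀ l, marg μ l ≤ pmax) (hpmax1 : pmax < 1)
    (i j : V) (hij : i ≠ j)
    (μ' : Finset V → ℝ)
    (hμ' : ∀ S : Finset V, μ' S = if j ∈ S then 0 else μ S / (1 - marg μ j)) :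
    marg μ' i - marg μ i ≤ (pmax / (1 - pmax)) * marg μ i :=
  marginal_change_multiplicative_bound_general μ hμ0 pmax hpmax hpmax1 i j μ' hμ'
end
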